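/- For j > 1, the longest prefix of the Fibonacci infinite word that is an abelian repetition of period F_j has length F_j(F_{j+1} + F_{j-1} + 1) - 2 if j is even, and F_j(F_{j+1} + F_{j-1}) - 2 if j is odd. -/

import Mathlib

/-!
Write `α = φ⁻¹`, `m = F j = fib (j + 1)` and `δ = m α - fib j = -ψ ^ (j + 1)`, so that
`|δ| = φ⁻¹ ^ (j + 1)`. The factor of length `ℓ` at position `n` has `⌊(n + ℓ) α⌋ - ⌊n α⌋`
letters `a`; a factor of length `m` thus has `fib j + ⌊{n α} + δ⌋` of them, and moving it by `m`
rotates `{n α}` by `δ`. Hence `b` consecutive blocks with a common Parikh vector keep the orbit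
`{n α} + t δ`, `t ≤ b`, inside `[0, 1]`; as `|δ| ≤ {n α} ≤ 1 - |δ|` for `1 ≤ n ≤ m` (best
approximation), this forces `(b + 1) |δ| ≤ 1`, i.e. `b + 1 ≤ ⌊φ ^ (j + 1)⌋`. Conversely, the
`⌊φ ^ (j + 1)⌋ - 1` blocks starting at position `m` all contain `fib j` letters `a`, and every
factor of length `m - 1` has `fib j - 1` or `fib j` of them, so fits into such a block. Finally
`φ ^ (j + 1) = F (j + 1) + F (j - 1) - ψ ^ (j + 1)` with `0 < |ψ ^ (j + 1)| < 1`, which yields the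
two parities.
-/

open scoped Classical

/-- Fibonacci numbers with the indexing `F 0 = 1`, `F 1 = 1`, `F (j+1) = F j + F (j-1)`. -/
def F (j : ℕ) : ℕ := Nat.fib (j + 1)

/-- The Parikh vector (number of `a`'s, number of `b`'s) of the length-`len` factor of the
Sturmian word `s_{α,0}` starting at position `n`, where the letter at position `p ≥ 1` is
`a` iff `{pα} ≥ {-α} = 1 - α`. -/
noncomputable def sturmParikh (α : ℝ) (n len : ℕ) : ℕ × ℕ :=
  (((Finset.range len).filter fun i => 1 - α ≤ Int.fract (((n + i : ℕ) : ℝ) * α)).card,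
   ((Finset.range len).filter fun i => Int.fract (((n + i : ℕ) : ℝ) * α) < 1 - α).card)

/-- Componentwise order on Parikh vectors. -/
def PLe (p q : ℕ × ℕ) : Prop := p.1 ≤ q.1 ∧ p.2 ≤ q.2

/-- The prefix of length `L` of the Sturmian word `s_{α,0}` is an abelian repetition of
period `m`: it factors as `u_0 u_1 ⋯ u_{b} u_{b+1}` where the `b ≥ 2` middle blocks
`u_1, …, u_b` have length `m` and a common Parikh vector `P`, and the Parikh vectors of the
head `u_0` and the tail `u_{b+1}` (both of length `< m`, possibly empty) are componentwise
contained in `P`. -/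
noncomputable def IsAbelianRepPrefix (α : ℝ) (m L : ℕ) : Prop :=
  ∃ h b : ℕ, h < m ∧ 2 ≤ b ∧ h + b * m ≤ L ∧ L < h + (b + 1) * m ∧
    (∀ j < b, sturmParikh α (1 + h + j * m) m = sturmParikh α (1 + h) m) ∧
    PLe (sturmParikh α 1 h) (sturmParikh α (1 + h) m) ∧
    PLe (sturmParikh α (1 + h + b * m) (L - (h + b * m))) (sturmParikh α (1 + h) m)

open Real
open scoped goldenRatio

lemma Int.floor_add_sub_floor (x y : ℝ) : ⌊x + y⌋ - ⌊x⌋ = ⌊Int.fract x + y⌋ := by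
  have hx : x + y = (Int.fract x + y) + ⌊x⌋ := by rw [Int.fract]; ring
  rw [hx, Int.floor_add_intCast, add_sub_cancel_right]

lemma Int.floor_add_sub_floor_eq_ite {α x : ℝ} (h₀ : 0 ≤ α) (h₁ : α < 1) :
    ⌊x + α⌋ - ⌊x⌋ = if 1 - α ≤ Int.fract x then 1 else 0 := by
  rw [Int.floor_add_sub_floor]
  have := Int.fract_nonneg x
  have := Int.fract_lt_one x
  split_ifs with h
  · rw [Int.floor_eq_iff]; push_cast; constructor <;> linarith
  · rw [Int.floor_eq_iff]; push_cast; constructor <;> linarith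

lemma Int.floor_natCast_mul_eq_floor {δ : ℝ} {k : ℕ} (hk : 1 ≤ k) (h : k * |δ| < 1) :
    ⌊k * δ⌋ = ⌊δ⌋ := by
  have hk' : (1 : ℝ) ≤ k := by exact_mod_cast hk
  rcases le_or_gt 0 δ with hδ | hδ
  · rw [abs_of_nonneg hδ] at h
    rw [Int.floor_eq_zero_iff.mpr ⟨by positivity, h⟩,
      Int.floor_eq_zero_iff.mpr ⟨hδ, by nlinarith⟩]
  · rw [abs_of_neg hδ] at h
    have hkδ : k * δ ≤ δ := by nlinarith
    rw [(Int.floor_eq_iff (z := -1)).mpr ⟨by push_cast; linarith, by push_cast; linarith⟩,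
      (Int.floor_eq_iff (z := -1)).mpr ⟨by push_cast; linarith, by push_cast; linarith⟩]

section SturmParikh

variable {α : ℝ}

lemma sturmParikh_fst_eq (h₀ : 0 ≤ α) (h₁ : α < 1) (n len : ℕ) :
    ((sturmParikh α n len).1 : ℤ) = ⌊((n + len : ℕ) : ℝ) * α⌋ - ⌊(n : ℝ) * α⌋ := by
  have htel := Finset.sum_range_sub (fun i => ⌊((n + i : ℕ) : ℝ) * α⌋) len
  rw [Nat.add_zero] at htel
  rw [sturmParikh, Finset.card_filter, Nat.cast_sum, ← htel]
  refine Finset.sum_congr rfl fun i _ => ?_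
  rw [← add_assoc, Nat.cast_succ, add_one_mul, Int.floor_add_sub_floor_eq_ite h₀ h₁]
  push_cast
  rfl

lemma sturmParikh_fst_add_snd (α : ℝ) (n len : ℕ) :
    (sturmParikh α n len).1 + (sturmParikh α n len).2 = len := by
  simp only [sturmParikh, ← not_le]
  rw [Finset.card_filter_add_card_filter_not, Finset.card_range]

lemma sturmParikh_eq_of_fst_eq {n n' len : ℕ}
    (h : (sturmParikh α n len).1 = (sturmParikh α n' len).1) :
    sturmParikh α n len = sturmParikh α n' len := by
  have := sturmParikh_fst_add_snd α n len
  have := sturmParikh_fst_add_snd α n' len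
  ext <;> omega

lemma pLe_sturmParikh_sub_one {n n' m : ℕ}
    (h₁ : (sturmParikh α n (m - 1)).1 ≤ (sturmParikh α n' m).1)
    (h₂ : (sturmParikh α n' m).1 ≤ (sturmParikh α n (m - 1)).1 + 1) :
    PLe (sturmParikh α n (m - 1)) (sturmParikh α n' m) := by
  have := sturmParikh_fst_add_snd α n (m - 1)
  have := sturmParikh_fst_add_snd α n' m
  constructor <;> omega

lemma sturmParikh_fst_mul_of_forall_eq (h₀ : 0 ≤ α) (h₁ : α < 1) {n m b : ℕ}
    (h : ∀ t < b, sturmParikh α (n + t * m) m = sturmParikh α n m) :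
    ((sturmParikh α n (b * m)).1 : ℤ) = b * (sturmParikh α n m).1 := by
  induction b with
  | zero => simp [sturmParikh]
  | succ b ih =>
    have hb := congrArg (fun p : ℕ × ℕ => (p.1 : ℤ)) (h b b.lt_succ_self)
    simp only [sturmParikh_fst_eq h₀ h₁] at hb ih ⊢
    rw [show n + (b + 1) * m = n + b * m + m by ring]
    push_cast at hb ih ⊢
    linarith [ih fun t ht => h t (by omega)]

end SturmParikh

lemma inv_goldenRatio_sq : φ⁻¹ ^ 2 = 1 - φ⁻¹ := by
  rw [inv_goldenRatio]
  linear_combination goldenConj_sq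

lemma inv_goldenRatio_pos : 0 < φ⁻¹ := inv_pos.mpr goldenRatio_pos

lemma one_half_lt_inv_goldenRatio : 1 / 2 < φ⁻¹ := by
  rw [one_div]
  exact inv_strictAnti₀ goldenRatio_pos goldenRatio_lt_two

lemma inv_goldenRatio_lt_one : φ⁻¹ < 1 := inv_lt_one_of_one_lt₀ one_lt_goldenRatio

lemma inv_goldenRatio_pow_le_sq {n : ℕ} (hn : 2 ≤ n) : φ⁻¹ ^ n ≤ φ⁻¹ ^ 2 :=
  pow_le_pow_of_le_one inv_goldenRatio_pos.le inv_goldenRatio_lt_one.le hn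

lemma abs_goldenConj_pow (n : ℕ) : |ψ ^ n| = φ⁻¹ ^ n := by
  rw [abs_pow, abs_of_neg goldenConj_neg, inv_goldenRatio]

lemma fib_succ_mul_inv_goldenRatio (n : ℕ) :
    (Nat.fib (n + 1) : ℝ) * φ⁻¹ = Nat.fib n - ψ ^ (n + 1) := by
  rw [inv_goldenRatio]
  linear_combination -goldenConj_mul_fib_succ_add_fib n

lemma goldenRatio_pow_add_goldenConj_pow (n : ℕ) :
    φ ^ (n + 1) + ψ ^ (n + 1) = Nat.fib (n + 2) + Nat.fib n := by
  rw [Nat.fib_add_two, Nat.cast_add]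
  linear_combination -goldenRatio_mul_fib_succ_add_fib n - goldenConj_mul_fib_succ_add_fib n +
    (Nat.fib (n + 1) : ℝ) * goldenRatio_add_goldenConj

lemma irrational_goldenRatio_pow_succ (n : ℕ) : Irrational (φ ^ (n + 1)) := by
  rw [← goldenRatio_mul_fib_succ_add_fib]
  exact (goldenRatio_irrational.mul_natCast (Nat.fib_pos.mpr n.succ_pos).ne').add_natCast _

lemma natCast_natFloor_goldenRatio_pow_lt (n : ℕ) : (⌊φ ^ (n + 1)⌋₊ : ℝ) < φ ^ (n + 1) :=
  (Nat.floor_le (by positivity)).lt_of_ne ((irrational_goldenRatio_pow_succ n).ne_nat _).symm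

lemma natFloor_goldenRatio_pow_of_even {n : ℕ} (hn : Even n) :
    ⌊φ ^ (n + 1)⌋₊ = Nat.fib (n + 2) + Nat.fib n := by
  have hneg : ψ ^ (n + 1) < 0 := hn.add_one.pow_neg goldenConj_neg
  have habs : |ψ ^ (n + 1)| < 1 := by
    rw [abs_goldenConj_pow]
    exact pow_lt_one₀ inv_goldenRatio_pos.le inv_goldenRatio_lt_one n.succ_ne_zero
  rw [Nat.floor_eq_iff (by positivity)]
  push_cast
  constructor <;> linarith [goldenRatio_pow_add_goldenConj_pow n, neg_abs_le (ψ ^ (n + 1))]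

lemma natFloor_goldenRatio_pow_add_one_of_odd {n : ℕ} (hn : Odd n) :
    ⌊φ ^ (n + 1)⌋₊ + 1 = Nat.fib (n + 2) + Nat.fib n := by
  have hpos : 0 < ψ ^ (n + 1) := hn.add_one.pow_pos goldenConj_ne_zero
  have habs : |ψ ^ (n + 1)| < 1 := by
    rw [abs_goldenConj_pow]
    exact pow_lt_one₀ inv_goldenRatio_pos.le inv_goldenRatio_lt_one n.succ_ne_zero
  rw [← Nat.floor_add_one (by positivity), Nat.floor_eq_iff (by positivity)]
  push_cast
  constructor <;> linarith [goldenRatio_pow_add_goldenConj_pow n, le_abs_self (ψ ^ (n + 1))]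

lemma three_le_natFloor_goldenRatio_pow {n : ℕ} (hn : 2 ≤ n) : 3 ≤ ⌊φ ^ (n + 1)⌋₊ := by
  refine Nat.le_floor ?_
  calc ((3 : ℕ) : ℝ) ≤ φ ^ 3 := by
        have h3 : φ ^ 3 = 2 * φ + 1 := by linear_combination (φ + 1) * goldenRatio_sq
        rw [h3]; push_cast; linarith [one_lt_goldenRatio]
    _ ≤ φ ^ (n + 1) := pow_le_pow_right₀ one_lt_goldenRatio.le (by omega)

/-- The denominators `fib (k + 1)` of the convergents of `φ⁻¹` are best approximations. -/
theorem inv_goldenRatio_pow_le_abs_sub {k n : ℕ} (hk : 1 ≤ k) (hn : 1 ≤ n)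
    (hnk : n ≤ Nat.fib (k + 1)) (q : ℤ) : φ⁻¹ ^ (k + 1) ≤ |n * φ⁻¹ - q| := by
  have hα₀ := inv_goldenRatio_pos
  have hα₁ := inv_goldenRatio_lt_one
  induction k, hk using Nat.le_induction generalizing n q with
  | base =>
    obtain rfl : n = 1 := le_antisymm hnk hn
    rw [Nat.cast_one, one_mul, inv_goldenRatio_sq]
    rcases le_or_gt q 0 with hq | hq
    · have hq' : (q : ℝ) ≤ 0 := by exact_mod_cast hq
      rw [abs_of_pos (by linarith)]
      linarith [one_half_lt_inv_goldenRatio]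
    · have hq' : (1 : ℝ) ≤ q := by exact_mod_cast hq
      rw [abs_of_neg (by linarith)]
      linarith
  | succ k hk ih =>
    rcases le_or_gt n (Nat.fib (k + 1)) with hle | hgt
    · exact (pow_le_pow_of_le_one hα₀.le hα₁.le (by omega)).trans (ih hn hle q)
    by_contra! hlt
    have hsmall : φ⁻¹ ^ (k + 2) ≤ φ⁻¹ ^ 2 := inv_goldenRatio_pow_le_sq (by omega)
    obtain ⟨hlt₁, hlt₂⟩ := abs_lt.mp hlt
    have hq₁ : 0 < q := by
      have : φ⁻¹ ^ 2 < φ⁻¹ := by rw [inv_goldenRatio_sq]; linarith [one_half_lt_inv_goldenRatio]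
      have : (1 : ℝ) ≤ n := by exact_mod_cast hn
      have : (0 : ℝ) < q := by nlinarith
      exact_mod_cast this
    have hq₂ : q ≤ Nat.fib (k + 1) := by
      have hfib := fib_succ_mul_inv_goldenRatio (k + 1)
      have hn' : (n : ℝ) * φ⁻¹ ≤ Nat.fib (k + 2) * φ⁻¹ := by gcongr
      have := abs_goldenConj_pow (k + 2)
      have : (q : ℝ) < Nat.fib (k + 1) + 1 := by
        linarith [neg_abs_le (ψ ^ (k + 2)), inv_goldenRatio_sq, one_half_lt_inv_goldenRatio]
      have : q < (Nat.fib (k + 1) : ℤ) + 1 := by exact_mod_cast this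
      omega
    lift q to ℕ using hq₁.le
    rw [Int.cast_natCast] at hlt
    -- `(q, n - q)` is an approximation pair one level down, with `φ` times the error
    have hstep : |q * φ⁻¹ - ((n - q : ℤ) : ℝ)| = φ * |n * φ⁻¹ - q| := by
      have hφ : φ = 1 + φ⁻¹ := by
        rw [inv_goldenRatio]; linear_combination -goldenRatio_add_goldenConj
      rw [← abs_of_pos goldenRatio_pos, ← abs_mul, abs_of_pos goldenRatio_pos, ← abs_neg]
      congr 1
      push_cast
      linear_combination (q : ℝ) * hφ - (n : ℝ) * mul_inv_cancel₀ goldenRatio_ne_zero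
    have hih := ih (n := q) (by omega) (by exact_mod_cast hq₂) (n - q)
    have hφα : φ * φ⁻¹ ^ (k + 2) = φ⁻¹ ^ (k + 1) := by
      rw [pow_succ', ← mul_assoc, mul_inv_cancel₀ goldenRatio_ne_zero, one_mul]
    have := mul_lt_mul_of_pos_left hlt goldenRatio_pos
    rw [hφα, ← hstep] at this
    exact this.not_ge hih

lemma fract_mul_inv_goldenRatio_mem_Icc {k n : ℕ} (hk : 1 ≤ k) (hn : 1 ≤ n)
    (hnk : n ≤ Nat.fib (k + 1)) :
    Int.fract (n * φ⁻¹) ∈ Set.Icc (φ⁻¹ ^ (k + 1)) (1 - φ⁻¹ ^ (k + 1)) := by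
  have hlow := inv_goldenRatio_pow_le_abs_sub hk hn hnk ⌊n * φ⁻¹⌋
  have hhigh := inv_goldenRatio_pow_le_abs_sub hk hn hnk (⌊n * φ⁻¹⌋ + 1)
  rw [← Int.fract, abs_of_nonneg (Int.fract_nonneg _)] at hlow
  rw [Int.cast_add, Int.cast_one, ← sub_sub, ← Int.fract,
    abs_of_neg (by linarith [Int.fract_lt_one (n * φ⁻¹)])] at hhigh
  exact ⟨hlow, by linarith⟩

/-- `b` steps of the rotation by `δ` cross integers `b` times as often as one step does; since one
step from `θ ∈ [|δ|, 1 - |δ|]` crosses none, the whole orbit stays in `[0, 1]`. -/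
lemma add_one_mul_abs_le_one_of_floor_add_mul {θ δ : ℝ} {b : ℕ} (hb : 2 ≤ b)
    (hθ : θ ∈ Set.Icc |δ| (1 - |δ|)) (h : ⌊θ + b * δ⌋ = b * ⌊θ + δ⌋) :
    (b + 1) * |δ| ≤ 1 := by
  obtain ⟨hθ₁, hθ₂⟩ := hθ
  have hb' : (2 : ℝ) ≤ b := by exact_mod_cast hb
  have hδ := neg_abs_le δ
  have hδ' := le_abs_self δ
  have hfloor := Int.floor_le (θ + b * δ)
  have hfloor' := Int.lt_floor_add_one (θ + b * δ)
  rw [h] at hfloor hfloor'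
  have hu₀ : 0 ≤ ⌊θ + δ⌋ := Int.floor_nonneg.mpr (by linarith)
  have hu₁ : ⌊θ + δ⌋ < 2 := Int.floor_lt.mpr (by push_cast; linarith)
  interval_cases hu : ⌊θ + δ⌋
  · push_cast at hfloor hfloor'
    rcases le_or_gt 0 δ with hδ₀ | hδ₀
    · rw [abs_of_nonneg hδ₀] at hθ₁ ⊢; linarith
    · rw [abs_of_neg hδ₀] at hθ₂ ⊢; linarith
  · have := (Int.floor_eq_iff.mp hu).1
    push_cast at hfloor this
    nlinarith [mul_nonneg (by linarith : (0 : ℝ) ≤ b - 1) (by linarith : (0 : ℝ) ≤ 1 / 2 - δ)]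

section FibonacciPeriod

lemma floor_add_mul_fib_sub_floor (n k j : ℕ) :
    ⌊((n + k * Nat.fib (j + 1) : ℕ) : ℝ) * φ⁻¹⌋ - ⌊(n : ℝ) * φ⁻¹⌋ =
      k * Nat.fib j + ⌊Int.fract (n * φ⁻¹) + k * -ψ ^ (j + 1)⌋ := by
  have hsplit : ((n + k * Nat.fib (j + 1) : ℕ) : ℝ) * φ⁻¹ =
      n * φ⁻¹ + (k * -ψ ^ (j + 1) + (k * Nat.fib j : ℕ)) := by
    push_cast
    linear_combination (k : ℝ) * fib_succ_mul_inv_goldenRatio j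
  rw [hsplit, Int.floor_add_sub_floor, ← add_assoc, Int.floor_add_natCast]
  push_cast
  ring

lemma floor_mul_fib_succ_mul_inv_goldenRatio (k j : ℕ) :
    ⌊((k * Nat.fib (j + 1) : ℕ) : ℝ) * φ⁻¹⌋ = k * Nat.fib j + ⌊k * -ψ ^ (j + 1)⌋ := by
  simpa using floor_add_mul_fib_sub_floor 0 k j

variable {j : ℕ}

lemma sturmParikh_fst_mul_fib {k : ℕ} (hk : 1 ≤ k) (hkφ : (k + 1 : ℝ) < φ ^ (j + 1)) :
    (sturmParikh φ⁻¹ (k * Nat.fib (j + 1)) (Nat.fib (j + 1))).1 = Nat.fib j := by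
  have hε : φ⁻¹ ^ (j + 1) * φ ^ (j + 1) = 1 := by
    rw [← mul_pow, inv_mul_cancel₀ goldenRatio_ne_zero, one_pow]
  have hfloor : ∀ i : ℕ, 1 ≤ i → i ≤ k + 1 → ⌊i * -ψ ^ (j + 1)⌋ = ⌊-ψ ^ (j + 1)⌋ := by
    intro i hi hik
    refine Int.floor_natCast_mul_eq_floor hi ?_
    rw [abs_neg, abs_goldenConj_pow]
    have : (i : ℝ) ≤ k + 1 := by exact_mod_cast hik
    nlinarith [pow_pos inv_goldenRatio_pos (j + 1), hε]
  have h := sturmParikh_fst_eq inv_goldenRatio_pos.le inv_goldenRatio_lt_one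
    (k * Nat.fib (j + 1)) (Nat.fib (j + 1))
  rw [← Nat.succ_mul, floor_mul_fib_succ_mul_inv_goldenRatio,
    floor_mul_fib_succ_mul_inv_goldenRatio, hfloor k hk (by omega),
    hfloor (k + 1) (by omega) le_rfl] at h
  zify
  rw [h]
  push_cast
  ring

lemma sturmParikh_fst_fib_sub_one (hj : 1 ≤ j) (n : ℕ) :
    (sturmParikh φ⁻¹ n (Nat.fib (j + 1) - 1)).1 ≤ Nat.fib j ∧
      Nat.fib j ≤ (sturmParikh φ⁻¹ n (Nat.fib (j + 1) - 1)).1 + 1 := by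
  have hm : 1 ≤ Nat.fib (j + 1) := Nat.fib_pos.mpr j.succ_pos
  have h := sturmParikh_fst_eq inv_goldenRatio_pos.le inv_goldenRatio_lt_one n
    (Nat.fib (j + 1) - 1)
  have hsplit : ((n + (Nat.fib (j + 1) - 1) : ℕ) : ℝ) * φ⁻¹ =
      n * φ⁻¹ + ((-ψ ^ (j + 1) - φ⁻¹) + (Nat.fib j : ℕ)) := by
    push_cast [hm]
    linear_combination fib_succ_mul_inv_goldenRatio j
  rw [hsplit, Int.floor_add_sub_floor, ← add_assoc, Int.floor_add_natCast] at h
  have hε : |-ψ ^ (j + 1)| ≤ φ⁻¹ ^ 2 := by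
    rw [abs_neg, abs_goldenConj_pow]; exact inv_goldenRatio_pow_le_sq (by omega)
  have hθ₀ := Int.fract_nonneg (n * φ⁻¹)
  have hθ₁ := Int.fract_lt_one (n * φ⁻¹)
  have hlow : -1 ≤ ⌊Int.fract (n * φ⁻¹) + (-ψ ^ (j + 1) - φ⁻¹)⌋ := by
    refine Int.le_floor.mpr ?_
    push_cast
    linarith [neg_abs_le (-ψ ^ (j + 1)), inv_goldenRatio_sq]
  have hhigh : ⌊Int.fract (n * φ⁻¹) + (-ψ ^ (j + 1) - φ⁻¹)⌋ < 1 := by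
    refine Int.floor_lt.mpr ?_
    push_cast
    linarith [le_abs_self (-ψ ^ (j + 1)), inv_goldenRatio_sq, one_half_lt_inv_goldenRatio]
  omega

theorem le_of_isAbelianRepPrefix_fib {ℓ : ℕ} (hj : 1 ≤ j)
    (hℓ : IsAbelianRepPrefix φ⁻¹ (Nat.fib (j + 1)) ℓ) :
    ℓ ≤ Nat.fib (j + 1) * (⌊φ ^ (j + 1)⌋₊ + 1) - 2 := by
  obtain ⟨h, b, hh, hb, -, hℓb, hblocks, -, -⟩ := hℓ
  have hcount := sturmParikh_fst_mul_of_forall_eq inv_goldenRatio_pos.le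
    inv_goldenRatio_lt_one hblocks
  have h₁ := floor_add_mul_fib_sub_floor (1 + h) 1 j
  simp only [one_mul, Nat.cast_one] at h₁
  rw [sturmParikh_fst_eq inv_goldenRatio_pos.le inv_goldenRatio_lt_one,
    sturmParikh_fst_eq inv_goldenRatio_pos.le inv_goldenRatio_lt_one,
    floor_add_mul_fib_sub_floor, h₁] at hcount
  have hrot : ⌊Int.fract (((1 + h : ℕ) : ℝ) * φ⁻¹) + b * -ψ ^ (j + 1)⌋ =
      b * ⌊Int.fract (((1 + h : ℕ) : ℝ) * φ⁻¹) + -ψ ^ (j + 1)⌋ := by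
    push_cast at hcount ⊢
    linear_combination hcount
  have hθ := fract_mul_inv_goldenRatio_mem_Icc hj (n := 1 + h) (by omega) (by omega)
  rw [← abs_goldenConj_pow, ← abs_neg] at hθ
  have hbound := add_one_mul_abs_le_one_of_floor_add_mul hb hθ hrot
  rw [abs_neg, abs_goldenConj_pow, inv_pow, ← div_eq_mul_inv,
    div_le_one (by positivity)] at hbound
  have hbK : b + 1 ≤ ⌊φ ^ (j + 1)⌋₊ := Nat.le_floor (by exact_mod_cast hbound)
  have := Nat.mul_le_mul_right (Nat.fib (j + 1)) hbK
  have : Nat.fib (j + 1) * (⌊φ ^ (j + 1)⌋₊ + 1) =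
      ⌊φ ^ (j + 1)⌋₊ * Nat.fib (j + 1) + Nat.fib (j + 1) := by ring
  omega

theorem isAbelianRepPrefix_fib {b : ℕ} (hj : 1 ≤ j) (hb : 2 ≤ b)
    (hbφ : (b + 1 : ℝ) < φ ^ (j + 1)) :
    IsAbelianRepPrefix φ⁻¹ (Nat.fib (j + 1)) (Nat.fib (j + 1) * (b + 2) - 2) := by
  set m := Nat.fib (j + 1) with hm_def
  have hm : 1 ≤ m := Nat.fib_pos.mpr j.succ_pos
  have hblock : ∀ k, 1 ≤ k → k ≤ b → (sturmParikh φ⁻¹ (k * m) m).1 = Nat.fib j := by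
    intro k hk hkb
    refine sturmParikh_fst_mul_fib hk (lt_of_le_of_lt ?_ hbφ)
    exact_mod_cast Nat.add_le_add_right hkb 1
  have hstart : 1 + (m - 1) = 1 * m := by omega
  have hhead_tail : ∀ n, PLe (sturmParikh φ⁻¹ n (m - 1)) (sturmParikh φ⁻¹ (1 * m) m) := by
    intro n
    obtain ⟨h₁, h₂⟩ := sturmParikh_fst_fib_sub_one hj n
    rw [← hm_def] at h₁ h₂
    have h₃ := hblock 1 le_rfl (by omega)
    exact pLe_sturmParikh_sub_one (by omega) (by omega)
  have hlen : m * (b + 2) = b * m + 2 * m := by ring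
  have hlen' : (b + 1) * m = b * m + m := by ring
  refine ⟨m - 1, b, by omega, hb, by omega, by omega, fun t ht => ?_, ?_, ?_⟩
  · have hpos : 1 + (m - 1) + t * m = (t + 1) * m := by rw [Nat.succ_mul]; omega
    rw [hpos, hstart]
    exact sturmParikh_eq_of_fst_eq
      (by rw [hblock _ (by omega) (by omega), hblock 1 le_rfl (by omega)])
  · rw [hstart]; exact hhead_tail 1
  · rw [show m * (b + 2) - 2 - (m - 1 + b * m) = m - 1 by omega, hstart]
    exact hhead_tail _

theorem isAbelianRepPrefix_fib_natFloor (hj : 2 ≤ j) :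
    IsAbelianRepPrefix φ⁻¹ (Nat.fib (j + 1)) (Nat.fib (j + 1) * (⌊φ ^ (j + 1)⌋₊ + 1) - 2) := by
  have hK := three_le_natFloor_goldenRatio_pow hj
  obtain ⟨b, hb⟩ : ∃ b, ⌊φ ^ (j + 1)⌋₊ = b + 1 := ⟨_, (Nat.sub_add_cancel (by omega)).symm⟩
  have hbφ := natCast_natFloor_goldenRatio_pow_lt j
  rw [hb] at hbφ ⊢
  push_cast at hbφ
  exact isAbelianRepPrefix_fib (by omega) (by omega) hbφ

end FibonacciPeriod

/-- For `j > 1`, the longest prefix of the Fibonacci infinite word (the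
Sturmian word of slope `α = φ - 1`) that is an abelian repetition of period `F j` has
length `F_j(F_{j+1} + F_{j-1} + 1) - 2` if `j` is even and `F_j(F_{j+1} + F_{j-1}) - 2`
if `j` is odd. -/
theorem fibonacci_longest_abelian_rep_prefix (j : ℕ) (hj : 1 < j) :
    IsGreatest {L : ℕ | IsAbelianRepPrefix ((Real.sqrt 5 - 1) / 2) (F j) L}
      (if Even j then F j * (F (j + 1) + F (j - 1) + 1) - 2
       else F j * (F (j + 1) + F (j - 1)) - 2) := by
  have hα : (√5 - 1) / 2 = φ⁻¹ := by rw [inv_goldenRatio]; ring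
  have hFpred : F (j - 1) = Nat.fib j := by rw [F, Nat.sub_add_cancel hj.le]
  have hlen : (if Even j then F j * (F (j + 1) + F (j - 1) + 1) - 2
      else F j * (F (j + 1) + F (j - 1)) - 2) = F j * (⌊φ ^ (j + 1)⌋₊ + 1) - 2 := by
    rcases Nat.even_or_odd j with he | ho
    · rw [if_pos he, hFpred, natFloor_goldenRatio_pow_of_even he]; rfl
    · rw [if_neg (Nat.not_even_iff_odd.mpr ho), hFpred, natFloor_goldenRatio_pow_add_one_of_odd ho]
      rfl
  rw [hα, hlen]
  exact ⟨isAbelianRepPrefix_fib_natFloor hj, fun ℓ hℓ => le_of_isAbelianRepPrefix_fib hj.le hℓ⟩
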